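/- arXiv:2004.09914 — 3 statements merged into one kernel-verified Lean document; each statement's English description precedes it below -/
import Mathlib

section
/- (Proposition 5.5 of the paper, via Kac's lemma.) For γ ∈ (0,1), the first return time τ to Y = (x*,1] is μ_Y-integrable and ∫_Y τ dμ_Y = (1 − 2^{γ−1})^{−1}. -/
open Real Set MeasureTheory

noncomputable section

/-- The common branch formula of the Thaler map:
`g(x) = (x^(1-γ) + (1+x)^(1-γ) − 1)^(1/(1-γ))` (real powers). -/
def thalerG (γ x : ℝ) : ℝ := (x ^ (1 - γ) + (1 + x) ^ (1 - γ) - 1) ^ (1 / (1 - γ))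

/-- The Thaler map with branch point `xs`: `T 0 = 0`, `T x = g x` on `(0, xs]` and
`T x = g x − 1` on `(xs, 1]`. -/
def thalerT (γ xs : ℝ) (x : ℝ) : ℝ :=
  if x ≤ 0 then 0 else if x ≤ xs then thalerG γ x else thalerG γ x - 1

/-- The invariant density `h(x) = x^(-γ) + (x+1)^(-γ)`. -/
def thalerH (γ x : ℝ) : ℝ := x ^ (-γ) + (x + 1) ^ (-γ)

/-- The measure `μ` on `[0,1]` with density `h` with respect to Lebesgue measure. -/
def thalerMu (γ : ℝ) : Measure ℝ :=
  (volume.restrict (Set.Icc (0 : ℝ) 1)).withDensity fun x => ENNReal.ofReal (thalerH γ x)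

/-- The normalized restriction `μ_Y = μ|_Y / μ(Y)` of `μ` to `Y = (xs,1]`. -/
def thalerMuY (γ xs : ℝ) : Measure ℝ :=
  (thalerMu γ (Set.Ioc xs 1))⁻¹ • (thalerMu γ).restrict (Set.Ioc xs 1)

/-- The first return time `τ(y) = inf{n ≥ 1 : T^n y ∈ Y}` to `Y = (xs, 1]`. -/
def thalerTau (γ xs : ℝ) (y : ℝ) : ℕ :=
  sInf {n : ℕ | 1 ≤ n ∧ (thalerT γ xs)^[n] y ∈ Set.Ioc xs 1}

open Filter

def Gfun (β x : ℝ) : ℝ := x ^ β + (1 + x) ^ β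

lemma Gfun_zero {β : ℝ} (hβ : β ≠ 0) : Gfun β 0 = 1 := by
  simp [Gfun, Real.zero_rpow hβ, Real.one_rpow]

lemma Gfun_one {β : ℝ} : Gfun β 1 = 1 + 2 ^ β := by
  norm_num [Gfun, Real.one_rpow]

lemma Gfun_strictMonoOn {β : ℝ} (hβ : 0 < β) : StrictMonoOn (Gfun β) (Ici 0) := by
  intro x hx y hy hxy
  have hx0 : (0:ℝ) ≤ x := hx
  have h1 : x ^ β < y ^ β := Real.rpow_lt_rpow hx0 hxy hβ
  have h2 : (1+x) ^ β < (1+y) ^ β :=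
    Real.rpow_lt_rpow (by linarith) (by linarith) hβ
  unfold Gfun; linarith

lemma Gfun_cont {β : ℝ} (hβ : 0 ≤ β) : Continuous (Gfun β) := by
  rw [continuous_iff_continuousAt]
  intro x
  exact (Real.continuousAt_rpow_const x β (Or.inr hβ)).add
    ((Real.continuousAt_rpow_const (1+x) β (Or.inr hβ)).comp
      (by fun_prop : ContinuousAt (fun x : ℝ => 1 + x) x))

lemma Gfun_le_iff {β : ℝ} (hβ : 0 < β) {x y : ℝ} (hx : 0 ≤ x) (hy : 0 ≤ y) :
    Gfun β x ≤ Gfun β y ↔ x ≤ y := (Gfun_strictMonoOn hβ).le_iff_le hx hy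

lemma Gfun_lt_iff {β : ℝ} (hβ : 0 < β) {x y : ℝ} (hx : 0 ≤ x) (hy : 0 ≤ y) :
    Gfun β x < Gfun β y ↔ x < y := (Gfun_strictMonoOn hβ).lt_iff_lt hx hy

lemma Gfun_inj {β : ℝ} (hβ : 0 < β) {x y : ℝ} (hx : 0 ≤ x) (hy : 0 ≤ y)
    (h : Gfun β x = Gfun β y) : x = y :=
  (Gfun_strictMonoOn hβ).injOn hx hy h

def Ginv (β t : ℝ) : ℝ := sSup {x | x ∈ Icc (0:ℝ) 1 ∧ Gfun β x ≤ t}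

lemma Ginv_spec {β t : ℝ} (hβ : 0 < β) (ht1 : 1 ≤ t) (ht2 : t ≤ Gfun β 1) :
    Ginv β t ∈ Icc (0:ℝ) 1 ∧ Gfun β (Ginv β t) = t := by
  have hcont : ContinuousOn (Gfun β) (Icc 0 1) := (Gfun_cont hβ.le).continuousOn
  have hmem : t ∈ Icc (Gfun β 0) (Gfun β 1) := by
    rw [Gfun_zero hβ.ne']; exact ⟨ht1, ht2⟩
  obtain ⟨x, hx, hGx⟩ := intermediate_value_Icc (by norm_num : (0:ℝ) ≤ 1) hcont hmem
  have hgreat : IsGreatest {z | z ∈ Icc (0:ℝ) 1 ∧ Gfun β z ≤ t} x := by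
    refine ⟨⟨hx, hGx.le⟩, ?_⟩
    rintro z ⟨hz, hGz⟩
    by_contra h
    push_neg at h
    have := (Gfun_strictMonoOn hβ) hx.1 hz.1 h
    rw [hGx] at this; linarith
  rw [Ginv, hgreat.csSup_eq]
  exact ⟨hx, hGx⟩

namespace ThalerAux

def aseq (β : ℝ) : ℕ → ℝ
  | 0 => 1
  | n+1 => Ginv β (1 + (aseq β n) ^ β)

variable {β : ℝ}

lemma aseq_zero : aseq β 0 = 1 := rfl

lemma aseq_mem (hβ : 0 < β) : ∀ n, 0 < aseq β n ∧ aseq β n ≤ 1 := by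
  intro n
  induction n with
  | zero => norm_num [aseq_zero]
  | succ n ih =>
    have hpow_pos : 0 < (aseq β n) ^ β := Real.rpow_pos_of_pos ih.1 β
    have hpow_le : (aseq β n) ^ β ≤ 2 ^ β :=
      Real.rpow_le_rpow ih.1.le (by linarith [ih.2]) hβ.le
    have ht1 : (1:ℝ) ≤ 1 + (aseq β n) ^ β := by linarith
    have ht2 : 1 + (aseq β n) ^ β ≤ Gfun β 1 := by rw [Gfun_one]; linarith
    obtain ⟨hmem, hG⟩ := Ginv_spec hβ ht1 ht2
    have ha : aseq β (n+1) = Ginv β (1 + (aseq β n) ^ β) := rfl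
    rw [ha]
    have hpos : 0 < Ginv β (1 + (aseq β n) ^ β) := by
      rcases lt_or_eq_of_le hmem.1 with h | h
      · exact h
      · exfalso
        rw [← h, Gfun_zero hβ.ne'] at hG; linarith
    exact ⟨hpos, hmem.2⟩

lemma aseq_G (hβ : 0 < β) (n : ℕ) :
    Gfun β (aseq β (n+1)) = 1 + (aseq β n) ^ β := by
  have ih := aseq_mem hβ n
  have hpow_pos : 0 < (aseq β n) ^ β := Real.rpow_pos_of_pos ih.1 β
  have hpow_le : (aseq β n) ^ β ≤ 2 ^ β :=
    Real.rpow_le_rpow ih.1.le (by linarith [ih.2]) hβ.le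
  exact (Ginv_spec hβ (by linarith) (by rw [Gfun_one]; linarith)).2

lemma aseq_strictAnti (hβ : 0 < β) : StrictAnti (aseq β) := by
  apply strictAnti_nat_of_succ_lt
  intro n
  have h1 := aseq_mem hβ n
  have h2 := aseq_mem hβ (n+1)
  rw [← Gfun_lt_iff hβ h2.1.le h1.1.le, aseq_G hβ n]
  have : (1:ℝ) < (1 + aseq β n) ^ β :=
    (Real.one_lt_rpow_iff_of_pos (by linarith [h1.1])).mpr (Or.inl ⟨by linarith [h1.1], hβ⟩)
  unfold Gfun; linarith

lemma aseq_tendsto (hβ : 0 < β) : Tendsto (aseq β) atTop (nhds 0) := by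
  have hanti : Antitone (aseq β) := (aseq_strictAnti hβ).antitone
  have hbdd : BddBelow (range (aseq β)) :=
    ⟨0, by rintro _ ⟨n, rfl⟩; exact (aseq_mem hβ n).1.le⟩
  have htend := tendsto_atTop_ciInf hanti hbdd
  set L := ⨅ n, aseq β n with hL
  have hL0 : 0 ≤ L := le_ciInf fun n => (aseq_mem hβ n).1.le
  have hL1 : L ≤ 1 := ciInf_le hbdd 0 |>.trans (by rw [aseq_zero])
  -- pass to the limit in aseq_G
  have h1 : Tendsto (fun n => Gfun β (aseq β (n+1))) atTop (nhds (Gfun β L)) :=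
    ((Gfun_cont hβ.le).continuousAt.tendsto).comp
      (htend.comp (tendsto_add_atTop_nat 1))
  have h2 : Tendsto (fun n => 1 + (aseq β n) ^ β) atTop (nhds (1 + L ^ β)) := by
    refine Tendsto.const_add 1 ?_
    exact ((Real.continuousAt_rpow_const L β (Or.inr hβ.le)).tendsto).comp htend
  have heq : Gfun β L = 1 + L ^ β := by
    refine tendsto_nhds_unique h1 ?_
    exact h2.congr (fun n => by rw [aseq_G hβ n])
  have : (1 + L) ^ β = 1 ^ β := by
    rw [Real.one_rpow]; unfold Gfun at heq; linarith
  have hLz : L = 0 := by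
    by_contra hne
    have hLpos : 0 < L := lt_of_le_of_ne hL0 (Ne.symm hne)
    have : (1:ℝ) < (1 + L) ^ β :=
      (Real.one_lt_rpow_iff_of_pos (by linarith)).mpr (Or.inl ⟨by linarith, hβ⟩)
    rw [Real.one_rpow] at *; linarith
  rw [← hLz]; exact htend
def yseq (β : ℝ) (n : ℕ) : ℝ := Ginv β (1 + (1 + aseq β n) ^ β)

lemma yseq_bounds (hβ : 0 < β) (n : ℕ) :
    yseq β n ∈ Icc (0:ℝ) 1 ∧ Gfun β (yseq β n) = 1 + (1 + aseq β n) ^ β := by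
  have h := aseq_mem hβ n
  have h1 : (0:ℝ) ≤ (1 + aseq β n) ^ β := Real.rpow_nonneg (by linarith [h.1]) β
  have h2 : (1 + aseq β n) ^ β ≤ 2 ^ β :=
    Real.rpow_le_rpow (by linarith [h.1]) (by linarith [h.2]) hβ.le
  have := Ginv_spec hβ (by linarith : (1:ℝ) ≤ 1 + (1 + aseq β n) ^ β)
    (by rw [Gfun_one]; linarith)
  exact this

lemma yseq_gt_xs (hβ : 0 < β) {xs : ℝ} (hxs0 : 0 < xs) (hGxs : Gfun β xs = 2) (n : ℕ) :
    xs < yseq β n := by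
  have h := aseq_mem hβ n
  have hb := yseq_bounds hβ (n := n)
  have hgt : (1:ℝ) < (1 + aseq β n) ^ β :=
    (Real.one_lt_rpow_iff_of_pos (by linarith [h.1])).mpr (Or.inl ⟨by linarith [h.1], hβ⟩)
  rw [← Gfun_lt_iff hβ hxs0.le hb.1.1, hGxs, hb.2]
  linarith

lemma yseq_zero (hβ : 0 < β) : yseq β 0 = 1 := by
  have hb := yseq_bounds hβ (n := 0)
  refine Gfun_inj hβ hb.1.1 (by norm_num) ?_
  rw [hb.2, Gfun_one, aseq_zero]
  norm_num

lemma yseq_strictAnti (hβ : 0 < β) : StrictAnti (yseq β) := by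
  apply strictAnti_nat_of_succ_lt
  intro n
  have h1 := yseq_bounds hβ (n := n)
  have h2 := yseq_bounds hβ (n := n+1)
  have ha1 := aseq_mem hβ n
  have ha2 := aseq_mem hβ (n+1)
  rw [← Gfun_lt_iff hβ h2.1.1 h1.1.1, h1.2, h2.2]
  have : (1 + aseq β (n+1)) ^ β < (1 + aseq β n) ^ β :=
    Real.rpow_lt_rpow (by linarith [ha2.1]) (by linarith [aseq_strictAnti hβ (Nat.lt_succ_self n)]) hβ
  linarith

lemma yseq_tendsto (hβ : 0 < β) {xs : ℝ} (hxs0 : 0 < xs) (hxs1 : xs < 1)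
    (hGxs : Gfun β xs = 2) : Tendsto (yseq β) atTop (nhds xs) := by
  have hanti : Antitone (yseq β) := (yseq_strictAnti hβ).antitone
  have hbdd : BddBelow (range (yseq β)) :=
    ⟨xs, by rintro _ ⟨n, rfl⟩; exact (yseq_gt_xs hβ hxs0 hGxs n).le⟩
  have htend := tendsto_atTop_ciInf hanti hbdd
  set M := ⨅ n, yseq β n with hM
  have hMxs : xs ≤ M := le_ciInf fun n => (yseq_gt_xs hβ hxs0 hGxs n).le
  have h1 : Tendsto (fun n => Gfun β (yseq β n)) atTop (nhds (Gfun β M)) :=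
    ((Gfun_cont hβ.le).continuousAt.tendsto).comp htend
  have h2 : Tendsto (fun n => 1 + (1 + aseq β n) ^ β) atTop (nhds (1 + (1:ℝ))) := by
    have : Tendsto (fun n => (1 + aseq β n) ^ β) atTop (nhds ((1 + 0:ℝ) ^ β)) := by
      refine ((Real.continuousAt_rpow_const (1 + 0:ℝ) β (Or.inr hβ.le)).tendsto).comp ?_
      exact (aseq_tendsto hβ).const_add 1
    rw [show ((1:ℝ) + 0) ^ β = 1 by norm_num [Real.one_rpow]] at this
    exact this.const_add 1
  have heq : Gfun β M = 2 := by
    have := tendsto_nhds_unique h1 (h2.congr (fun n => by rw [(yseq_bounds hβ (n := n)).2]))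
    norm_num at this ⊢; linarith
  have : M = xs := Gfun_inj hβ (by linarith) hxs0.le (by rw [heq, hGxs])
  rw [← this]; exact htend

lemma aseq_one_eq_xs (hβ : 0 < β) {xs : ℝ} (hxs0 : 0 < xs) (hGxs : Gfun β xs = 2) :
    aseq β 1 = xs := by
  refine Gfun_inj hβ (aseq_mem hβ 1).1.le hxs0.le ?_
  rw [aseq_G hβ 0, aseq_zero, Real.one_rpow, hGxs]; norm_num

lemma aseq_le_xs (hβ : 0 < β) {xs : ℝ} (hxs0 : 0 < xs) (hGxs : Gfun β xs = 2) (n : ℕ) :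
    aseq β (n+1) ≤ xs := by
  rw [← aseq_one_eq_xs hβ hxs0 hGxs]
  exact (aseq_strictAnti hβ).antitone (Nat.one_le_iff_ne_zero.mpr (Nat.succ_ne_zero n))

def gB (β x : ℝ) : ℝ := (Gfun β x - 1) ^ (1 / β)

variable {β : ℝ}

lemma gB_lt (hβ : 0 < β) {u v : ℝ} (hu : 0 ≤ u) (huv : u < v) : gB β u < gB β v := by
  have h1 : (1:ℝ) ≤ Gfun β u := by
    rw [← Gfun_zero hβ.ne']
    exact (Gfun_strictMonoOn hβ).monotoneOn (by norm_num) hu hu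
  have h2 : Gfun β u < Gfun β v := Gfun_strictMonoOn hβ hu (by linarith : (0:ℝ) ≤ v) huv
  exact Real.rpow_lt_rpow (by linarith) (by linarith) (by positivity)

lemma gB_le (hβ : 0 < β) {u v : ℝ} (hu : 0 ≤ u) (huv : u ≤ v) : gB β u ≤ gB β v := by
  rcases eq_or_lt_of_le huv with h | h
  · rw [h]
  · exact (gB_lt hβ hu h).le

lemma gB_eval (hβ : 0 < β) {x t : ℝ} (ht : 0 ≤ t) (hG : Gfun β x = 1 + t ^ β) :
    gB β x = t := by
  rw [gB, hG, show 1 + t ^ β - 1 = t ^ β by ring, one_div,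
    Real.rpow_rpow_inv ht hβ.ne']

end ThalerAux


namespace ThalerAux

lemma thalerG_eq_gB (γ x : ℝ) : thalerG γ x = gB (1 - γ) x := rfl

section dynamics

variable {γ xs : ℝ} (hβ : 0 < 1 - γ) (hxs0 : 0 < xs) (hxs1 : xs < 1)
  (hGxs : Gfun (1 - γ) xs = 2)

include hβ hxs0 hxs1 hGxs

lemma T_left {z : ℝ} (hz : z ∈ Ioc 0 xs) : thalerT γ xs z = gB (1 - γ) z := by
  rw [thalerT, if_neg (not_le.mpr hz.1), if_pos hz.2, thalerG_eq_gB]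

lemma T_Y {y : ℝ} (hy : y ∈ Ioc xs 1) : thalerT γ xs y = gB (1 - γ) y - 1 := by
  rw [thalerT, if_neg (by push_neg; linarith [hy.1] : ¬ y ≤ 0),
    if_neg (not_le.mpr hy.1), thalerG_eq_gB]

lemma step_lemma {n : ℕ} {z : ℝ}
    (hz : z ∈ Ioc (aseq (1-γ) (n+2)) (aseq (1-γ) (n+1))) :
    thalerT γ xs z ∈ Ioc (aseq (1-γ) (n+1)) (aseq (1-γ) n) := by
  set β := 1 - γ
  have ha2 := aseq_mem hβ (n+2)
  have hz0 : 0 < z := lt_trans ha2.1 hz.1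
  have hzxs : z ≤ xs := le_trans hz.2 (aseq_le_xs hβ hxs0 hGxs n)
  rw [T_left hβ hxs0 hxs1 hGxs ⟨hz0, hzxs⟩]
  constructor
  · have := gB_lt hβ ha2.1.le hz.1
    rwa [gB_eval hβ (aseq_mem hβ (n+1)).1.le (aseq_G hβ (n+1))] at this
  · have := gB_le hβ hz0.le hz.2
    rwa [gB_eval hβ (aseq_mem hβ n).1.le (aseq_G hβ n)] at this

lemma iter_lemma {n : ℕ} {z : ℝ} (hz : z ∈ Ioc (aseq (1-γ) (n+1)) (aseq (1-γ) n)) :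
    ∀ k, k ≤ n → (thalerT γ xs)^[k] z ∈ Ioc (aseq (1-γ) (n+1-k)) (aseq (1-γ) (n-k)) := by
  intro k
  induction k with
  | zero => intro _; simpa using hz
  | succ k ih =>
    intro hk
    have hk' : k ≤ n := Nat.le_of_succ_le hk
    have ihh := ih hk'
    set m := n - (k+1) with hm
    have h1 : n - k = m + 1 := by omega
    have h2 : n + 1 - k = m + 2 := by omega
    have h3 : n + 1 - (k+1) = m + 1 := by omega
    rw [h1, h2] at ihh
    rw [Function.iterate_succ_apply', h3]
    exact step_lemma hβ hxs0 hxs1 hGxs ihh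

lemma tau_eq {n : ℕ} {y : ℝ} (hy : y ∈ Ioc (yseq (1-γ) (n+1)) (yseq (1-γ) n)) :
    thalerTau γ xs y = n + 1 := by
  set β := 1 - γ
  have hyY : y ∈ Ioc xs 1 := ⟨lt_trans (yseq_gt_xs hβ hxs0 hGxs (n+1)) hy.1,
    le_trans hy.2 (yseq_bounds hβ (n := n)).1.2⟩
  have hTy : thalerT γ xs y ∈ Ioc (aseq β (n+1)) (aseq β n) := by
    rw [T_Y hβ hxs0 hxs1 hGxs hyY]
    have ha := aseq_mem hβ n
    have ha1 := aseq_mem hβ (n+1)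
    constructor
    · have := gB_lt hβ (yseq_bounds hβ (n := n+1)).1.1 hy.1
      rw [gB_eval hβ (by linarith [ha1.1] : (0:ℝ) ≤ 1 + aseq β (n+1))
        (yseq_bounds hβ (n := n+1)).2] at this
      linarith
    · have := gB_le hβ (by linarith [yseq_gt_xs hβ hxs0 hGxs (n+1), hy.1] : (0:ℝ) ≤ y) hy.2
      rw [gB_eval hβ (by linarith [ha.1] : (0:ℝ) ≤ 1 + aseq β n)
        (yseq_bounds hβ (n := n)).2] at this
      linarith
  have hiter := iter_lemma hβ hxs0 hxs1 hGxs hTy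
  have hmem : (n+1) ∈ {m : ℕ | 1 ≤ m ∧ (thalerT γ xs)^[m] y ∈ Ioc xs 1} := by
    refine ⟨Nat.succ_le_succ (Nat.zero_le n), ?_⟩
    have := hiter n le_rfl
    rw [Function.iterate_succ_apply]
    simp only [Nat.sub_self, Nat.add_sub_cancel_left] at this
    rwa [aseq_one_eq_xs hβ hxs0 hGxs, aseq_zero] at this
  refine le_antisymm (Nat.sInf_le hmem) ?_
  refine le_csInf ⟨n+1, hmem⟩ ?_
  rintro m ⟨hm1, hmY⟩
  by_contra h
  push_neg at h
  -- m ≤ n, 1 ≤ m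
  obtain ⟨k, rfl⟩ : ∃ k, m = k + 1 := ⟨m - 1, by omega⟩
  have hkn : k ≤ n := by omega
  have := hiter k hkn
  rw [Function.iterate_succ_apply] at hmY
  have hle : aseq β (n - k) ≤ xs := by
    obtain ⟨j, hj⟩ : ∃ j, n - k = j + 1 := ⟨n - k - 1, by omega⟩
    rw [hj]
    exact aseq_le_xs hβ hxs0 hGxs j
  exact absurd hmY.1 (not_lt.mpr (le_trans this.2 hle))

end dynamics
lemma mu_Ioc {γ : ℝ} (hγ0 : 0 < γ) (hγ1 : γ < 1) {p q : ℝ}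
    (hp : 0 < p) (hpq : p ≤ q) (hq : q ≤ 1) :
    thalerMu γ (Ioc p q)
      = ENNReal.ofReal ((Gfun (1-γ) q - Gfun (1-γ) p) / (1-γ)) := by
  have hβ : 0 < 1 - γ := by linarith
  have hsub : Ioc p q ⊆ Icc (0:ℝ) 1 := fun x hx => ⟨le_of_lt (lt_of_le_of_lt hp.le hx.1), le_trans hx.2 hq⟩
  rw [thalerMu, withDensity_apply _ measurableSet_Ioc,
    Measure.restrict_restrict measurableSet_Ioc, inter_eq_self_of_subset_left hsub]
  have hcont1 : ContinuousOn (fun x : ℝ => x ^ (-γ)) (uIcc p q) := by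
    rw [uIcc_of_le hpq]
    intro x hx
    exact (Real.continuousAt_rpow_const x (-γ)
      (Or.inl (by linarith [hx.1] : x ≠ 0))).continuousWithinAt
  have hcont2 : ContinuousOn (fun x : ℝ => (x+1) ^ (-γ)) (uIcc p q) := by
    rw [uIcc_of_le hpq]
    intro x hx
    exact (ContinuousAt.rpow_const (by fun_prop : ContinuousAt (fun x : ℝ => x + 1) x)
      (Or.inl (by intro h; have := hx.1; nlinarith : x + 1 ≠ 0))).continuousWithinAt
  have hcont : ContinuousOn (thalerH γ) (uIcc p q) := by
    intro x hx
    exact ((hcont1 x hx).add (hcont2 x hx))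
  have hii : IntervalIntegrable (thalerH γ) volume p q := hcont.intervalIntegrable
  have hint : IntegrableOn (thalerH γ) (Ioc p q) volume :=
    (intervalIntegrable_iff_integrableOn_Ioc_of_le hpq).mp hii
  have hnn : 0 ≤ᵐ[volume.restrict (Ioc p q)] thalerH γ := by
    refine (ae_restrict_iff' measurableSet_Ioc).mpr (ae_of_all _ fun x hx => ?_)
    have hx0 : 0 ≤ x := le_of_lt (lt_of_le_of_lt hp.le hx.1)
    have : (0:ℝ) ≤ x ^ (-γ) := Real.rpow_nonneg hx0 _
    have : (0:ℝ) ≤ (x+1) ^ (-γ) := Real.rpow_nonneg (by linarith) _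
    unfold thalerH; positivity
  rw [← ofReal_integral_eq_lintegral_ofReal hint hnn]
  congr 1
  rw [← intervalIntegral.integral_of_le hpq]
  have i1 : IntervalIntegrable (fun x : ℝ => x ^ (-γ)) volume p q :=
    hcont1.intervalIntegrable
  have i2 : IntervalIntegrable (fun x : ℝ => (x+1) ^ (-γ)) volume p q :=
    hcont2.intervalIntegrable
  have eadd : ∫ x in p..q, thalerH γ x
      = (∫ x in p..q, x ^ (-γ)) + ∫ x in p..q, (x+1) ^ (-γ) := by
    rw [← intervalIntegral.integral_add i1 i2]; rfl
  have i1val : ∫ x in p..q, x ^ (-γ) = (q ^ (1-γ) - p ^ (1-γ)) / (1-γ) := by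
    rw [integral_rpow (Or.inl (by linarith : (-1:ℝ) < -γ)), show -γ + 1 = 1 - γ by ring]
  have i2val : ∫ x in p..q, (x+1) ^ (-γ) = ((q+1) ^ (1-γ) - (p+1) ^ (1-γ)) / (1-γ) := by
    rw [intervalIntegral.integral_comp_add_right (fun x : ℝ => x ^ (-γ)) 1,
      integral_rpow (Or.inl (by linarith : (-1:ℝ) < -γ)), show -γ + 1 = 1 - γ by ring]
  rw [eadd, i1val, i2val]
  unfold Gfun
  rw [show (1:ℝ) + q = q + 1 from add_comm 1 q, show (1:ℝ) + p = p + 1 from add_comm 1 p]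
  ring

end ThalerAux


open ThalerAux

set_option maxHeartbeats 1000000 in
/-- Proposition 5.5, via Kac's lemma: For `γ ∈ (0,1)`, the first return
time `τ` to `Y = (x*,1]` is `μ_Y`-integrable and `∫_Y τ dμ_Y = (1 − 2^(γ−1))⁻¹`. -/
theorem thaler_kac (γ : ℝ) (hγ : γ ∈ Set.Ioo (0 : ℝ) 1)
    (xs : ℝ) (hxs : xs ∈ Set.Ioo (0 : ℝ) 1)
    (hxseq : xs ^ (1 - γ) + (1 + xs) ^ (1 - γ) = 2) :
    Integrable (fun y => (thalerTau γ xs y : ℝ)) (thalerMuY γ xs) ∧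
    ∫ y, (thalerTau γ xs y : ℝ) ∂(thalerMuY γ xs) = (1 - 2 ^ (γ - 1))⁻¹ := by
  obtain ⟨hγ0, hγ1⟩ := hγ
  obtain ⟨hxs0, hxs1⟩ := hxs
  have hβ : 0 < 1 - γ := by linarith
  set β := 1 - γ with hβdef
  have hGxs : Gfun β xs = 2 := hxseq
  set s : ℕ → Set ℝ := fun n => Ioc (yseq β (n+1)) (yseq β n) with hs
  have hmeas_s : ∀ n, MeasurableSet (s n) := fun n => measurableSet_Ioc
  have hdisj : Pairwise (Function.onFun Disjoint s) := by
    have key : ∀ m n : ℕ, m < n → Disjoint (s m) (s n) := by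
      intro m n h
      simp only [hs]
      rw [Set.Ioc_disjoint_Ioc]
      have h1 : yseq β n ≤ yseq β (m+1) := (yseq_strictAnti hβ).antitone (by omega)
      calc min (yseq β m) (yseq β n) ≤ yseq β n := min_le_right _ _
        _ ≤ yseq β (m+1) := h1
        _ ≤ max (yseq β (m+1)) (yseq β (n+1)) := le_max_left _ _
    intro m n hmn
    rcases lt_or_gt_of_ne hmn with h | h
    · exact key m n h
    · exact (key n m h).symm
  have hub : ∀ n, s n ⊆ Ioc xs 1 := fun n x hx =>
    ⟨lt_trans (yseq_gt_xs hβ hxs0 hGxs (n+1)) hx.1,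
     le_trans hx.2 (yseq_bounds hβ (n := n)).1.2⟩
  have hY_union : Ioc xs 1 = ⋃ n, s n := by
    apply Subset.antisymm
    · intro x hx
      have hex : ∃ N, yseq β N < x :=
        ((tendsto_order.mp (yseq_tendsto hβ hxs0 hxs1 hGxs)).2 x hx.1).exists
      classical
      have hN : yseq β (Nat.find hex) < x := Nat.find_spec hex
      have hN0 : Nat.find hex ≠ 0 := by
        intro h
        rw [h, yseq_zero hβ] at hN
        exact absurd hx.2 (not_le.mpr hN)
      obtain ⟨m, hm⟩ : ∃ m, Nat.find hex = m + 1 := ⟨Nat.find hex - 1, by omega⟩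
      refine mem_iUnion.mpr ⟨m, ?_, ?_⟩
      · rw [← hm] at *; exact hN
      · by_contra h
        push_neg at h
        exact (Nat.find_min hex (by omega : m < Nat.find hex)) h
    · exact iUnion_subset hub
  have htau : ∀ n, ∀ y ∈ s n, thalerTau γ xs y = n + 1 :=
    fun n y hy => tau_eq hβ hxs0 hxs1 hGxs hy
  set c : ℕ → ℝ := fun n => (1 + aseq β n) ^ β with hc
  have hmu_s : ∀ n, thalerMu γ (s n) = ENNReal.ofReal ((c n - c (n+1)) / β) := by
    intro n
    have h1 := yseq_gt_xs hβ hxs0 hGxs (n+1)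
    have h2 := mu_Ioc hγ0 hγ1 (lt_trans hxs0 h1)
      ((yseq_strictAnti hβ) (Nat.lt_succ_self n)).le (yseq_bounds hβ (n := n)).1.2
    simp only [hs]
    rw [h2, (yseq_bounds hβ (n := n)).2, (yseq_bounds hβ (n := n+1)).2]
    congr 1; ring
  have hc_anti : ∀ n, c (n+1) ≤ c n := by
    intro n
    exact Real.rpow_le_rpow (by linarith [(aseq_mem hβ (n+1)).1])
      (by linarith [(aseq_strictAnti hβ (Nat.lt_succ_self n))]) hβ.le
  have hc0 : c 0 = 2 ^ β := by
    simp only [hc, aseq_zero]; norm_num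
  have hc_rec : ∀ n, c (n+1) = 1 + (aseq β n) ^ β - (aseq β (n+1)) ^ β := by
    intro n
    have h := aseq_G hβ n
    unfold Gfun at h
    simp only [hc]
    linarith
  have hc_lim : Tendsto c atTop (nhds 1) := by
    have h1 : Tendsto (fun n => 1 + aseq β n) atTop (nhds (1 + 0)) :=
      (aseq_tendsto hβ).const_add 1
    have h2 := ((Real.continuousAt_rpow_const (1 + 0 : ℝ) β (Or.inr hβ.le)).tendsto).comp h1
    simpa [Function.comp_def, hc] using h2
  have ha_pow_lim : Tendsto (fun n => (aseq β n) ^ β) atTop (nhds 0) := by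
    have h2 := ((Real.continuousAt_rpow_const (0 : ℝ) β (Or.inr hβ.le)).tendsto).comp
      (aseq_tendsto hβ)
    simpa [Real.zero_rpow hβ.ne', Function.comp_def] using h2
  have hc_ge1 : ∀ n, 1 ≤ c n := by
    intro n
    have := Real.rpow_le_rpow (by norm_num : (0:ℝ) ≤ 1)
      (by linarith [(aseq_mem hβ n).1] : (1:ℝ) ≤ 1 + aseq β n) hβ.le
    rwa [Real.one_rpow] at this
  have h_tail : ∀ k, HasSum (fun i => (c (i+k) - c (i+k+1)) / β) ((c k - 1) / β) := by
    intro k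
    have hnn : ∀ i, 0 ≤ (c (i+k) - c (i+k+1)) / β :=
      fun i => div_nonneg (by linarith [hc_anti (i+k)]) hβ.le
    rw [hasSum_iff_tendsto_nat_of_nonneg hnn]
    have hps : ∀ N, ∑ i ∈ Finset.range N, (c (i+k) - c (i+k+1)) / β
        = (c k - c (N+k)) / β := by
      intro N
      have h := Finset.sum_range_sub' (fun i => c (i+k) / β) N
      simp only [Nat.zero_add] at h
      calc ∑ i ∈ Finset.range N, (c (i+k) - c (i+k+1)) / β
          = ∑ i ∈ Finset.range N, (c (i+k) / β - c (i+1+k) / β) := by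
            refine Finset.sum_congr rfl fun i _ => ?_
            have he : i + 1 + k = i + k + 1 := by omega
            rw [he]; ring
        _ = c k / β - c (N+k) / β := h
        _ = (c k - c (N+k)) / β := by ring
    have hlim : Tendsto (fun N => (c k - c (N+k)) / β) atTop (nhds ((c k - 1) / β)) :=
      (tendsto_const_nhds.sub (hc_lim.comp (tendsto_add_atTop_nat k))).div_const β
    exact hlim.congr (fun N => (hps N).symm)
  have h_tail2 : HasSum (fun i => ((aseq β i) ^ β - (aseq β (i+1)) ^ β) / β) (1 / β) := by
    have hnn : ∀ i, 0 ≤ ((aseq β i) ^ β - (aseq β (i+1)) ^ β) / β := by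
      intro i
      have := Real.rpow_le_rpow (by linarith [(aseq_mem hβ (i+1)).1])
        (aseq_strictAnti hβ (Nat.lt_succ_self i)).le hβ.le
      exact div_nonneg (by linarith) hβ.le
    rw [hasSum_iff_tendsto_nat_of_nonneg hnn]
    have hps : ∀ N, ∑ i ∈ Finset.range N, ((aseq β i) ^ β - (aseq β (i+1)) ^ β) / β
        = ((aseq β 0) ^ β - (aseq β N) ^ β) / β := by
      intro N
      have h := Finset.sum_range_sub' (fun i => (aseq β i) ^ β / β) N
      calc ∑ i ∈ Finset.range N, ((aseq β i) ^ β - (aseq β (i+1)) ^ β) / β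
          = ∑ i ∈ Finset.range N, ((aseq β i) ^ β / β - (aseq β (i+1)) ^ β / β) := by
            refine Finset.sum_congr rfl fun i _ => ?_
            ring
        _ = (aseq β 0) ^ β / β - (aseq β N) ^ β / β := h
        _ = ((aseq β 0) ^ β - (aseq β N) ^ β) / β := by ring
    have hlim : Tendsto (fun N => ((aseq β 0) ^ β - (aseq β N) ^ β) / β) atTop
        (nhds (((aseq β 0) ^ β - 0) / β)) :=
      (tendsto_const_nhds.sub ha_pow_lim).div_const β
    rw [show (aseq β 0 : ℝ) ^ β = 1 by rw [aseq_zero, Real.one_rpow]] at hlim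
    simp only [sub_zero] at hlim
    exact hlim.congr (fun N => by rw [hps N, aseq_zero, Real.one_rpow])
  set u : ℕ → ENNReal := fun n => ENNReal.ofReal ((c n - c (n+1)) / β) with hu
  have h2β : (1:ℝ) < 2 ^ β :=
    (Real.one_lt_rpow_iff_of_pos (by norm_num)).mpr (Or.inl ⟨by norm_num, hβ⟩)
  have hS : ∑' n : ℕ, ((n:ENNReal)+1) * u n = ENNReal.ofReal (2 ^ β / β) := by
    have h1 : ∀ n : ℕ, ((n:ENNReal)+1) * u n = ∑' k : ℕ, if k ≤ n then u n else 0 := by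
      intro n
      rw [tsum_eq_sum (s := Finset.range (n+1))
        (fun b hb => if_neg (by simp at hb; omega))]
      rw [Finset.sum_congr rfl (fun k hk => if_pos (by simp at hk; omega))]
      simp only [Finset.sum_const, Finset.card_range, nsmul_eq_mul]
      push_cast
      ring
    have htail_e : ∀ k : ℕ, ∑' n : ℕ, (if k ≤ n then u n else 0) = ENNReal.ofReal ((c k - 1) / β) := by
      intro k
      have hshift : ∑' n : ℕ, (if k ≤ n then u n else 0)
          = ∑' i : ℕ, (if k ≤ i + k then u (i+k) else 0) := by
        refine (Function.Injective.tsum_eq (add_left_injective k) ?_).symm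
        intro n hn
        simp only [Function.mem_support, ne_eq, ite_eq_right_iff, not_forall] at hn
        obtain ⟨hkn, -⟩ := hn
        refine ⟨n - k, ?_⟩
        show n - k + k = n
        omega
      rw [hshift, tsum_congr (fun i => if_pos (by omega : k ≤ i + k))]
      have hnn : ∀ i, 0 ≤ (c (i+k) - c (i+k+1)) / β :=
        fun i => div_nonneg (by linarith [hc_anti (i+k)]) hβ.le
      calc ∑' i, u (i+k)
          = ENNReal.ofReal (∑' i, (c (i+k) - c (i+k+1)) / β) :=
            (ENNReal.ofReal_tsum_of_nonneg hnn (h_tail k).summable).symm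
        _ = ENNReal.ofReal ((c k - 1) / β) := by rw [(h_tail k).tsum_eq]
    calc ∑' n : ℕ, ((n:ENNReal)+1) * u n
        = ∑' (n : ℕ) (k : ℕ), if k ≤ n then u n else 0 := tsum_congr h1
      _ = ∑' (k : ℕ) (n : ℕ), if k ≤ n then u n else 0 := ENNReal.tsum_comm
      _ = ∑' k : ℕ, ENNReal.ofReal ((c k - 1) / β) := tsum_congr htail_e
      _ = ENNReal.ofReal (2 ^ β / β) := by
          rw [tsum_eq_zero_add' ENNReal.summable]
          have h0 : ENNReal.ofReal ((c 0 - 1) / β) = ENNReal.ofReal ((2 ^ β - 1) / β) := by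
            rw [hc0]
          rw [h0]
          have he : ∀ i : ℕ, (c (i+1) - 1) / β = ((aseq β i) ^ β - (aseq β (i+1)) ^ β) / β := by
            intro i
            rw [hc_rec i]; ring
          rw [tsum_congr (fun i => by rw [he i])]
          have hnn2 : ∀ i, 0 ≤ ((aseq β i) ^ β - (aseq β (i+1)) ^ β) / β := by
            intro i
            have := Real.rpow_le_rpow (by linarith [(aseq_mem hβ (i+1)).1])
              (aseq_strictAnti hβ (Nat.lt_succ_self i)).le hβ.le
            exact div_nonneg (by linarith) hβ.le
          rw [← ENNReal.ofReal_tsum_of_nonneg hnn2 h_tail2.summable, h_tail2.tsum_eq]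
          rw [← ENNReal.ofReal_add (div_nonneg (by linarith) hβ.le) (by positivity)]
          congr 1
          ring
  set ν := (thalerMu γ).restrict (Ioc xs 1) with hν
  have hlint : ∫⁻ y, ENNReal.ofReal ((thalerTau γ xs y : ℝ)) ∂ν
      = ENNReal.ofReal (2 ^ β / β) := by
    have e1 : ∫⁻ y, ENNReal.ofReal ((thalerTau γ xs y : ℝ)) ∂ν
        = ∑' n : ℕ, ∫⁻ y in s n, ENNReal.ofReal ((thalerTau γ xs y : ℝ)) ∂(thalerMu γ) := by
      rw [hν, hY_union]
      exact lintegral_iUnion hmeas_s hdisj _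
    rw [e1]
    have e2 : ∀ n : ℕ, ∫⁻ y in s n, ENNReal.ofReal ((thalerTau γ xs y : ℝ)) ∂(thalerMu γ)
        = ((n:ENNReal)+1) * u n := by
      intro n
      rw [setLIntegral_congr_fun (hmeas_s n)
        (fun y hy => by rw [htau n y hy]; norm_cast :
          ∀ y ∈ s n, ENNReal.ofReal ((thalerTau γ xs y : ℝ))
            = ENNReal.ofReal ((n:ℝ) + 1)), setLIntegral_const, hmu_s n]
      congr 1
      rw [ENNReal.ofReal_add (Nat.cast_nonneg n) zero_le_one, ENNReal.ofReal_natCast,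
        ENNReal.ofReal_one]
    rw [tsum_congr e2, hS]
  have hFe_meas : Measurable fun y : ℝ =>
      (∑' n, (s n).indicator (fun _ => ((n:ENNReal)+1)) y).toReal :=
    (Measurable.ennreal_tsum fun n =>
      (measurable_const.indicator (hmeas_s n))).ennreal_toReal
  have hae : (fun y => (thalerTau γ xs y : ℝ))
      =ᵐ[ν] (fun y => (∑' n, (s n).indicator (fun _ => ((n:ENNReal)+1)) y).toReal) := by
    rw [hν]
    filter_upwards [ae_restrict_mem measurableSet_Ioc] with y hy
    rw [hY_union] at hy
    obtain ⟨m, hm⟩ := mem_iUnion.mp hy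
    rw [htau m y hm]
    rw [tsum_eq_single m (fun n hn => by
      rw [indicator_of_notMem (Set.disjoint_left.mp (hdisj hn) · hm)])]
    rw [indicator_of_mem hm]
    rw [ENNReal.toReal_add (ENNReal.natCast_ne_top m) ENNReal.one_ne_top]
    simp
  have haesm : AEStronglyMeasurable (fun y => (thalerTau γ xs y : ℝ)) ν :=
    hFe_meas.stronglyMeasurable.aestronglyMeasurable.congr hae.symm
  have hint_ν : Integrable (fun y => (thalerTau γ xs y : ℝ)) ν := by
    refine ⟨haesm, ?_⟩
    rw [hasFiniteIntegral_iff_ofReal (ae_of_all _ fun y => Nat.cast_nonneg _)]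
    rw [hlint]
    exact ENNReal.ofReal_lt_top
  have hmuY : thalerMu γ (Ioc xs 1) = ENNReal.ofReal ((2 ^ β - 1) / β) := by
    rw [mu_Ioc hγ0 hγ1 hxs0 hxs1.le le_rfl, Gfun_one, hGxs]
    congr 1
    ring
  have hmuY_ne0 : thalerMu γ (Ioc xs 1) ≠ 0 := by
    rw [hmuY]
    exact (ENNReal.ofReal_pos.mpr (div_pos (by linarith) hβ)).ne'
  have hinv_ne_top : (thalerMu γ (Ioc xs 1))⁻¹ ≠ ⊤ := ENNReal.inv_ne_top.mpr hmuY_ne0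
  constructor
  · rw [thalerMuY]
    exact hint_ν.smul_measure hinv_ne_top
  · rw [thalerMuY, integral_smul_measure]
    have hnn : 0 ≤ᵐ[ν] fun y => (thalerTau γ xs y : ℝ) :=
      ae_of_all _ fun y => Nat.cast_nonneg _
    rw [integral_eq_lintegral_of_nonneg_ae hnn haesm, hlint, hmuY]
    rw [ENNReal.toReal_inv,
      ENNReal.toReal_ofReal (div_nonneg (by linarith : (0:ℝ) ≤ 2 ^ β - 1) hβ.le),
      ENNReal.toReal_ofReal (div_nonneg (Real.rpow_nonneg (by norm_num) β) hβ.le)]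
    have h2 : (2:ℝ) ^ (γ - 1) = (2 ^ β)⁻¹ := by
      rw [← Real.rpow_neg (by norm_num : (0:ℝ) ≤ 2)]
      congr 1
      rw [hβdef]; ring
    rw [h2]
    rw [smul_eq_mul]
    have hβne : β ≠ 0 := hβ.ne'
    have hA1 : (2:ℝ) ^ β - 1 ≠ 0 := by linarith
    have hA0 : (2:ℝ) ^ β ≠ 0 := by positivity
    field_simp
end
end

section
/- (Key identity in the proof of Theorem 4.1 of the paper.) Define ṽ : [0,1] → ℝ by ṽ(x) = 1 for x ∈ [0,x*] and ṽ(x) = (1 − 2^{1−γ})^{−1} for x ∈ (x*,1]. Then for every y ∈ Y = (x*,1] with first return time τ(y) = m, the Birkhoff sum of ṽ over one excursion satisfies Σ_{j=0}^{m−1} ṽ(T^j(y)) = m − (1 − 2^{γ−1})^{−1}. -/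
open Real Set

noncomputable section

/-- The observable `ṽ`: `ṽ(x) = 1` for `x ∈ [0,x*]` and `ṽ(x) = (1 − 2^(1−γ))⁻¹` for
`x ∈ (x*,1]`. -/
def thalerV (γ xs : ℝ) (x : ℝ) : ℝ := if x ≤ xs then 1 else (1 - 2 ^ (1 - γ))⁻¹

lemma thalerT_mem (γ : ℝ) (hγ : γ ∈ Set.Ioo (0 : ℝ) 1 ∪ Set.Ioi (1 : ℝ))
    (xs : ℝ) (hxs : xs ∈ Set.Ioo (0 : ℝ) 1)
    (hxseq : xs ^ (1 - γ) + (1 + xs) ^ (1 - γ) = 2) :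
    ∀ x ∈ Icc (0:ℝ) 1, thalerT γ xs x ∈ Icc (0:ℝ) 1 := by
  intro x hx
  set p := 1 - γ with hp
  have hp0 : p ≠ 0 := by
    rcases hγ with h | h
    · have := h.2; intro hc; rw [hp, sub_eq_zero] at hc; linarith
    · have := mem_Ioi.mp h; intro hc; rw [hp, sub_eq_zero] at hc; linarith
  have h2p : ((2:ℝ) ^ p) ^ (1/p) = 2 := by
    rw [← Real.rpow_mul (by norm_num : (0:ℝ) ≤ 2), mul_one_div_cancel hp0, Real.rpow_one]
  unfold thalerT thalerG
  rw [← hp]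
  split_ifs with h1 h2
  · constructor <;> norm_num
  -- In both remaining branches, 0 < x
  all_goals push_neg at h1
  · -- 0 < x ≤ xs, T x = g x; show g x ∈ [0,1]
    rcases hγ with hγ' | hγ'
    · -- p > 0 : h increasing, 0 ≤ h ≤ h(xs) = 1
      have hpp : 0 < p := by rw [hp]; linarith [hγ'.2]
      have h1x : (1:ℝ) ≤ (1+x) ^ p := by
        calc (1:ℝ) = 1 ^ p := (one_rpow p).symm
        _ ≤ (1+x) ^ p := rpow_le_rpow (by norm_num) (by linarith) hpp.le
      have hxp : x ^ p ≤ xs ^ p := rpow_le_rpow h1.le h2 hpp.le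
      have h1xp : (1+x) ^ p ≤ (1+xs) ^ p := rpow_le_rpow (by linarith) (by linarith) hpp.le
      have hnn : 0 ≤ x ^ p + (1 + x) ^ p - 1 := by
        have := rpow_nonneg h1.le p; linarith
      have hle : x ^ p + (1 + x) ^ p - 1 ≤ 1 := by linarith
      refine ⟨rpow_nonneg hnn _, ?_⟩
      calc (x ^ p + (1 + x) ^ p - 1) ^ (1/p) ≤ 1 ^ (1/p) :=
            rpow_le_rpow hnn hle (by positivity)
        _ = 1 := one_rpow _
    · -- p < 0 : h decreasing, h ≥ h(xs) = 1
      have hpp : p < 0 := by rw [hp]; linarith [mem_Ioi.mp hγ']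
      have hxp : xs ^ p ≤ x ^ p := rpow_le_rpow_of_nonpos h1 h2 hpp.le
      have h1xp : (1+xs) ^ p ≤ (1+x) ^ p :=
        rpow_le_rpow_of_nonpos (by linarith [hxs.1]) (by linarith) hpp.le
      have hge : 1 ≤ x ^ p + (1 + x) ^ p - 1 := by linarith
      refine ⟨rpow_nonneg (by linarith) _, ?_⟩
      calc (x ^ p + (1 + x) ^ p - 1) ^ (1/p) ≤ 1 ^ (1/p) :=
            rpow_le_rpow_of_nonpos one_pos hge (by
              rw [one_div]; exact (inv_nonpos.mpr hpp.le))
        _ = 1 := one_rpow _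
  · -- xs < x ≤ 1, T x = g x - 1; show 1 ≤ g x ≤ 2
    push_neg at h2
    have hx1 : x ≤ 1 := hx.2
    rcases hγ with hγ' | hγ'
    · -- p > 0 : 1 = h(xs) ≤ h(x) ≤ h(1) = 2^p
      have hpp : 0 < p := by rw [hp]; linarith [hγ'.2]
      have hxp : xs ^ p ≤ x ^ p := rpow_le_rpow hxs.1.le h2.le hpp.le
      have h1xp : (1+xs) ^ p ≤ (1+x) ^ p := rpow_le_rpow (by linarith [hxs.1]) (by linarith) hpp.le
      have hxp' : x ^ p ≤ 1 ^ p := rpow_le_rpow (by linarith [hxs.1]) hx1 hpp.le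
      have h1xp' : (1+x) ^ p ≤ 2 ^ p := rpow_le_rpow (by linarith [hxs.1]) (by linarith) hpp.le
      rw [one_rpow] at hxp'
      have hge : 1 ≤ x ^ p + (1 + x) ^ p - 1 := by linarith
      have hle : x ^ p + (1 + x) ^ p - 1 ≤ 2 ^ p := by linarith
      constructor
      · have : (1:ℝ) = 1 ^ (1/p) := (one_rpow _).symm
        have h1g : (1:ℝ) ≤ (x ^ p + (1 + x) ^ p - 1) ^ (1/p) := by
          calc (1:ℝ) = 1 ^ (1/p) := (one_rpow _).symm
          _ ≤ (x ^ p + (1 + x) ^ p - 1) ^ (1/p) := rpow_le_rpow (by norm_num) hge (by positivity)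
        linarith
      · have hg2 : (x ^ p + (1 + x) ^ p - 1) ^ (1/p) ≤ 2 := by
          calc (x ^ p + (1 + x) ^ p - 1) ^ (1/p) ≤ ((2:ℝ) ^ p) ^ (1/p) :=
              rpow_le_rpow (by linarith) hle (by positivity)
          _ = 2 := h2p
        linarith
    · -- p < 0 : 2^p = h(1) ≤ h(x) ≤ h(xs) = 1
      have hpp : p < 0 := by rw [hp]; linarith [mem_Ioi.mp hγ']
      have hzp : 0 < (2:ℝ) ^ p := rpow_pos_of_pos two_pos p
      have hxp : x ^ p ≤ xs ^ p := rpow_le_rpow_of_nonpos hxs.1 h2.le hpp.le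
      have h1xp : (1+x) ^ p ≤ (1+xs) ^ p :=
        rpow_le_rpow_of_nonpos (by linarith [hxs.1]) (by linarith) hpp.le
      have hxp' : 1 ^ p ≤ x ^ p :=
        rpow_le_rpow_of_nonpos (by linarith [hxs.1]) hx1 hpp.le
      have h1xp' : 2 ^ p ≤ (1+x) ^ p :=
        rpow_le_rpow_of_nonpos (by linarith [hxs.1]) (by linarith) hpp.le
      rw [one_rpow] at hxp'
      have hle : x ^ p + (1 + x) ^ p - 1 ≤ 1 := by linarith
      have hge : 2 ^ p ≤ x ^ p + (1 + x) ^ p - 1 := by linarith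
      have hinvp : 1/p ≤ 0 := by rw [one_div]; exact inv_nonpos.mpr hpp.le
      constructor
      · have h1g : (1:ℝ) ≤ (x ^ p + (1 + x) ^ p - 1) ^ (1/p) := by
          calc (1:ℝ) = 1 ^ (1/p) := (one_rpow _).symm
          _ ≤ (x ^ p + (1 + x) ^ p - 1) ^ (1/p) :=
              rpow_le_rpow_of_nonpos (by linarith) hle hinvp
        linarith
      · have hg2 : (x ^ p + (1 + x) ^ p - 1) ^ (1/p) ≤ 2 := by
          calc (x ^ p + (1 + x) ^ p - 1) ^ (1/p) ≤ ((2:ℝ) ^ p) ^ (1/p) :=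
              rpow_le_rpow_of_nonpos hzp hge hinvp
          _ = 2 := h2p
        linarith

/-- key identity in the proof of Theorem 4.1: For every `y ∈ Y = (x*,1]`
with first return time `τ(y) = m`, the Birkhoff sum of `ṽ` over one excursion satisfies
`Σ_{j=0}^{m−1} ṽ(T^j y) = m − (1 − 2^(γ−1))⁻¹`. -/
theorem thaler_excursion_birkhoff_sum (γ : ℝ)
    (hγ : γ ∈ Set.Ioo (0 : ℝ) 1 ∪ Set.Ioi (1 : ℝ))
    (xs : ℝ) (hxs : xs ∈ Set.Ioo (0 : ℝ) 1)
    (hxseq : xs ^ (1 - γ) + (1 + xs) ^ (1 - γ) = 2) :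
    ∀ y ∈ Set.Ioc xs 1, ∀ m : ℕ, 1 ≤ m → thalerTau γ xs y = m →
      (∑ j ∈ Finset.range m, thalerV γ xs ((thalerT γ xs)^[j] y))
        = (m : ℝ) - (1 - 2 ^ (γ - 1))⁻¹ := by
  intro y hy m hm htau
  -- all iterates stay in [0,1]
  have hiter : ∀ j : ℕ, (thalerT γ xs)^[j] y ∈ Icc (0:ℝ) 1 := by
    intro j
    induction j with
    | zero => exact ⟨by simp; linarith [hxs.1, hy.1], by simpa using hy.2⟩
    | succ k ih =>
      rw [Function.iterate_succ_apply']
      exact thalerT_mem γ hγ xs hxs hxseq _ ih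
  -- for 1 ≤ j < m, the iterate is not in Y, hence ≤ xs
  have hmid : ∀ j : ℕ, 1 ≤ j → j < m → (thalerT γ xs)^[j] y ≤ xs := by
    intro j hj1 hjm
    by_contra hcon
    push_neg at hcon
    have hmem : j ∈ {n : ℕ | 1 ≤ n ∧ (thalerT γ xs)^[n] y ∈ Set.Ioc xs 1} :=
      ⟨hj1, hcon, (hiter j).2⟩
    have := Nat.sInf_le hmem
    rw [← thalerTau, htau] at this
    omega
  -- compute the sum
  obtain ⟨k, rfl⟩ : ∃ k, m = k + 1 := ⟨m - 1, by omega⟩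
  rw [Finset.sum_range_succ']
  have hsum1 : (∑ j ∈ Finset.range k, thalerV γ xs ((thalerT γ xs)^[j+1] y)) = k := by
    have hterm : ∀ j ∈ Finset.range k, thalerV γ xs ((thalerT γ xs)^[j+1] y) = 1 := by
      intro j hj
      have h := hmid (j+1) (by omega) (by have := Finset.mem_range.mp hj; omega)
      simp only [thalerV]
      rw [if_pos h]
    rw [Finset.sum_congr rfl hterm, Finset.sum_const, nsmul_eq_mul, mul_one,
      Finset.card_range]
  have hv0 : thalerV γ xs ((thalerT γ xs)^[0] y) = (1 - 2 ^ (1 - γ))⁻¹ := by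
    simp [thalerV, not_le.mpr hy.1]
  rw [hsum1, hv0]
  -- algebra: k + (1 - 2^(1-γ))⁻¹ = (k+1) - (1 - 2^(γ-1))⁻¹
  set a : ℝ := 2 ^ (1 - γ) with ha
  have ha0 : 0 < a := rpow_pos_of_pos two_pos _
  have hainv : (2:ℝ) ^ (γ - 1) = a⁻¹ := by
    rw [ha, ← Real.rpow_neg (by norm_num : (0:ℝ) ≤ 2)]
    ring_nf
  have ha1 : a ≠ 1 := by
    rcases hγ with h | h
    · have : (1:ℝ) < a := by
        rw [ha]
        exact Real.one_lt_rpow_iff_of_pos two_pos |>.mpr (Or.inl ⟨by norm_num, by linarith [h.2]⟩)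
      linarith
    · have : a < 1 := by
        rw [ha]
        exact Real.rpow_lt_one_of_one_lt_of_neg (by norm_num) (by linarith [mem_Ioi.mp h])
      linarith
  rw [hainv]
  have h1a : 1 - a ≠ 0 := sub_ne_zero.mpr (Ne.symm ha1)
  have h1ai : 1 - a⁻¹ ≠ 0 := by
    intro hc
    have : a⁻¹ = 1 := by linarith
    exact ha1 (by rw [← inv_inv a, this, inv_one])
  have key : (1 - a)⁻¹ + (1 - a⁻¹)⁻¹ = 1 := by
    have h2 : 1 - a⁻¹ = (a - 1) / a := by field_simp
    have h3 : a - 1 ≠ 0 := by intro hc; exact h1a (by linarith)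
    rw [h2, inv_div]
    field_simp
    ring
  push_cast
  linarith
end
end

section
/- For γ ∈ (0,1), the observable ṽ has mean zero with respect to the invariant measure of the Thaler map: ∫_0^1 ṽ(x)·h(x) dx = 0, where ṽ(x) = 1 for x ∈ [0,x*] and ṽ(x) = (1 − 2^{1−γ})^{−1} for x ∈ (x*,1]; equivalently ∫_0^{x*} h(x) dx + (1 − 2^{1−γ})^{−1}·∫_{x*}^1 h(x) dx = 0. -/
open Real Set MeasureTheory intervalIntegral

noncomputable section

lemma thalerH_intble (γ : ℝ) (hγ : γ ∈ Set.Ioo (0 : ℝ) 1) (a b : ℝ) :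
    IntervalIntegrable (thalerH γ) volume a b := by
  have h1 : IntervalIntegrable (fun x : ℝ => x ^ (-γ)) volume a b :=
    intervalIntegrable_rpow' (by linarith [hγ.2])
  have h2 : IntervalIntegrable (fun x : ℝ => (x + 1) ^ (-γ)) volume a b := by
    have := (intervalIntegrable_rpow' (a := a + 1) (b := b + 1)
      (r := -γ) (by linarith [hγ.2])).comp_add_right 1
    simpa using this
  exact h1.add h2

lemma thalerH_integral (γ : ℝ) (hγ : γ ∈ Set.Ioo (0 : ℝ) 1) (a b : ℝ) :
    (∫ x in a..b, thalerH γ x)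
      = (b ^ (1 - γ) + (b + 1) ^ (1 - γ) - a ^ (1 - γ) - (a + 1) ^ (1 - γ)) / (1 - γ) := by
  have h1 : IntervalIntegrable (fun x : ℝ => x ^ (-γ)) volume a b :=
    intervalIntegrable_rpow' (by linarith [hγ.2])
  have h2 : IntervalIntegrable (fun x : ℝ => (x + 1) ^ (-γ)) volume a b := by
    have := (intervalIntegrable_rpow' (a := a + 1) (b := b + 1)
      (r := -γ) (by linarith [hγ.2])).comp_add_right 1
    simpa using this
  have e1 : (∫ x in a..b, x ^ (-γ)) = (b ^ (-γ + 1) - a ^ (-γ + 1)) / (-γ + 1) :=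
    integral_rpow (Or.inl (by linarith [hγ.2]))
  have e2 : (∫ x in a..b, (x + 1) ^ (-γ))
      = ((b + 1) ^ (-γ + 1) - (a + 1) ^ (-γ + 1)) / (-γ + 1) := by
    rw [intervalIntegral.integral_comp_add_right (fun x => x ^ (-γ)) 1]
    exact integral_rpow (Or.inl (by linarith [hγ.2]))
  have : (∫ x in a..b, thalerH γ x)
      = (∫ x in a..b, x ^ (-γ)) + ∫ x in a..b, (x + 1) ^ (-γ) := by
    simpa [thalerH] using intervalIntegral.integral_add h1 h2
  rw [this, e1, e2]
  have hne : -γ + 1 ≠ 0 := by linarith [hγ.2]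
  have : -γ + 1 = 1 - γ := by ring
  rw [this]
  ring

/-- For `γ ∈ (0,1)`, the observable `ṽ` has mean zero with respect to the
invariant measure of the Thaler map: `∫_0^1 ṽ(x) h(x) dx = 0`; equivalently
`∫_0^{x*} h + (1 − 2^(1−γ))⁻¹ ∫_{x*}^1 h = 0`. -/
theorem thalerV_mean_zero (γ : ℝ) (hγ : γ ∈ Set.Ioo (0 : ℝ) 1)
    (xs : ℝ) (hxs : xs ∈ Set.Ioo (0 : ℝ) 1)
    (hxseq : xs ^ (1 - γ) + (1 + xs) ^ (1 - γ) = 2) :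
    (∫ x in (0 : ℝ)..1, thalerV γ xs x * thalerH γ x) = 0 ∧
    (∫ x in (0 : ℝ)..xs, thalerH γ x)
      + (1 - 2 ^ (1 - γ))⁻¹ * (∫ x in xs..1, thalerH γ x) = 0 := by
  have hγ1 : (0:ℝ) < 1 - γ := by linarith [hγ.2]
  have h2gt : (1:ℝ) < 2 ^ (1 - γ) :=
    (Real.one_lt_rpow_iff_of_pos (by norm_num)).mpr (Or.inl ⟨by norm_num, hγ1⟩)
  have h2ne : (2:ℝ) ^ (1 - γ) ≠ 1 := h2gt.ne' 
  set c : ℝ := (1 - 2 ^ (1 - γ))⁻¹ with hc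
  have hI1 : (∫ x in (0:ℝ)..xs, thalerH γ x) = 1 / (1 - γ) := by
    rw [thalerH_integral γ hγ]
    rw [Real.zero_rpow (by linarith), show xs + 1 = 1 + xs by ring]
    rw [show (0:ℝ) + 1 = 1 by ring, Real.one_rpow]
    rw [show xs ^ (1-γ) + (1+xs)^(1-γ) - 0 - 1 = (xs ^ (1-γ) + (1+xs)^(1-γ)) - 1 by ring,
      hxseq]
    norm_num
  have hI2 : (∫ x in xs..1, thalerH γ x) = (2 ^ (1 - γ) - 1) / (1 - γ) := by
    rw [thalerH_integral γ hγ]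
    rw [Real.one_rpow, show (1:ℝ) + 1 = 2 by ring, show xs + 1 = 1 + xs by ring]
    rw [show 1 + 2 ^ (1-γ) - xs ^ (1-γ) - (1+xs)^(1-γ)
        = 1 + 2 ^ (1-γ) - (xs ^ (1-γ) + (1+xs)^(1-γ)) by ring, hxseq]
    ring
  have key : (∫ x in (0 : ℝ)..xs, thalerH γ x) + c * (∫ x in xs..1, thalerH γ x) = 0 := by
    rw [hI1, hI2, hc]
    have hne : 1 - (2:ℝ) ^ (1 - γ) ≠ 0 := by
      intro h; apply h2ne; linarith
    field_simp
    ring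
  refine ⟨?_, key⟩
  have hsplit : (∫ x in (0 : ℝ)..1, thalerV γ xs x * thalerH γ x)
      = (∫ x in (0:ℝ)..xs, thalerV γ xs x * thalerH γ x)
        + ∫ x in xs..1, thalerV γ xs x * thalerH γ x := by
    refine (intervalIntegral.integral_add_adjacent_intervals ?_ ?_).symm
    · apply ((thalerH_intble γ hγ 0 xs).congr ?_)
      intro x hx
      have : x ≤ xs := by
        rcases hx with hx
        rw [Set.uIoc_of_le (le_of_lt hxs.1)] at hx
        exact hx.2
      simp [thalerV, this]
    · apply (((thalerH_intble γ hγ xs 1).smul c).congr ?_)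
      intro x hx
      have : ¬ x ≤ xs := by
        rw [Set.uIoc_of_le (le_of_lt hxs.2)] at hx
        exact not_le.mpr hx.1
      simp [thalerV, this, hc, mul_comm]
  have e1 : (∫ x in (0:ℝ)..xs, thalerV γ xs x * thalerH γ x)
      = ∫ x in (0:ℝ)..xs, thalerH γ x := by
    apply intervalIntegral.integral_congr_ae
    filter_upwards with x hx
    rw [Set.uIoc_of_le (le_of_lt hxs.1)] at hx
    simp [thalerV, hx.2]
  have e2 : (∫ x in xs..1, thalerV γ xs x * thalerH γ x)
      = c * ∫ x in xs..1, thalerH γ x := by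
    rw [← intervalIntegral.integral_const_mul]
    apply intervalIntegral.integral_congr_ae
    filter_upwards with x hx
    rw [Set.uIoc_of_le (le_of_lt hxs.2)] at hx
    simp [thalerV, not_le.mpr hx.1, hc]
  rw [hsplit, e1, e2, key]
end
end
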